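/- arXiv:2308.14218 — 5 statements merged into one kernel-verified Lean document; each statement's English description precedes it below -/
import Mathlib

section
/- Let 𝔪 = 𝔪₋₁ ⊕ 𝔪₋₂ be a step 2 fundamental graded Lie algebra over ℝ such that (1) dim 𝔪₋₂ ≤ 3, (2) dim 𝔪₋₂ < dim 𝔪₋₁, and (3) 𝔪₋₁ ∩ Z(𝔪) = 0. Then 𝔪 is ad-surjective, i.e., there exists X ∈ 𝔪₋₁ such that the linear map ad X : 𝔪₋₁ → 𝔪₋₂, Y ↦ ⁅X, Y⁆, is surjective. -/
/-!
Write `B x y = ⁅x, y⁆` for `x y ∈ 𝔪₋₁` and pick `X₀` for which `ad X₀` has maximal rank `r`,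
with image `U` and kernel `K`; suppose `U ≠ 𝔪₋₂`. Perturbing `X₀` to `X₀ + tY` for small `t ≠ 0`
shows `B(𝔪₋₁, K) ⊆ U`, since otherwise the rank would grow. As `𝔪₋₁ = K + span {v₁, …, v_r}`
where the `⁅X₀, vᵢ⁆` span `U`, and the brackets span `𝔪₋₂`, some `⁅vᵢ, vⱼ⁆` with `i ≠ j` lies
outside `U`; as `r < dim 𝔪₋₂ ≤ 3`, this forces `r = 2`. Then every `ad x` with `x ∉ K` has a
value outside `U`, so `im (ad x) ∩ U` is the line through `⁅x, X₀⁆`. Hence for `z ∈ K` the maps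
`ad z` and `ad X₀` are pointwise proportional, thus `ad z = μ ad X₀` and `z - μ X₀` is central.
So `K ⊆ ℝ X₀`, against `dim K = dim 𝔪₋₁ - 2 ≥ 2`.
-/

open Module Submodule LinearMap Filter Topology

/-- A *step 2 fundamental graded Lie algebra* structure on a real Lie algebra `L`:
a direct sum decomposition `L = m1 ⊕ m2` with `⁅m1, m1⁆ = m2`, `⁅m1, m2⁆ = 0` and
`⁅m2, m2⁆ = 0`. -/
structure IsStep2FGLA (L : Type*) [LieRing L] [LieAlgebra ℝ L]
    (m1 m2 : Submodule ℝ L) : Prop where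
  compl : IsCompl m1 m2
  span_brackets : m2 = Submodule.span ℝ {z : L | ∃ x ∈ m1, ∃ y ∈ m1, ⁅x, y⁆ = z}
  bracket_m1_m2 : ∀ x ∈ m1, ∀ y ∈ m2, ⁅x, y⁆ = 0
  bracket_m2_m2 : ∀ x ∈ m2, ∀ y ∈ m2, ⁅x, y⁆ = 0

theorem LinearMap.apply_mem_range_of_finrank_range_add_smul_le
    {M W : Type*} [AddCommGroup M] [Module ℝ M] [AddCommGroup W] [Module ℝ W]
    [FiniteDimensional ℝ W] (f g : M →ₗ[ℝ] W)
    (hmax : ∀ t : ℝ, finrank ℝ (range (f + t • g)) ≤ finrank ℝ (range f))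
    {z : M} (hz : f z = 0) : g z ∈ range f := by
  by_contra hgz
  set r := finrank ℝ (range f)
  let b := Module.finBasis ℝ (range f)
  choose y hy using fun i => (b i).2
  let F : ℝ → Fin (r + 1) → W := fun t => Fin.snoc (fun i => (f + t • g) (y i)) (g z)
  let D : Fin (r + 1) → W := Fin.snoc (fun i => g (y i)) 0
  have hF0 : LinearIndependent ℝ (F 0) := by
    simp only [F, zero_smul, add_zero, hy]
    refine linearIndependent_finSnoc.2 ⟨b.linearIndependent.map' _ (range f).ker_subtype, ?_⟩
    refine fun h => hgz (span_le.2 ?_ h)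
    rintro _ ⟨i, rfl⟩
    exact (b i).2
  -- `W` carries no topology: test linear independence in coordinates
  let e := (Module.finBasis ℝ W).equivFun
  have hev : ∀ᶠ t in 𝓝 (0 : ℝ), LinearIndependent ℝ (F t) := by
    have hc : Continuous fun t : ℝ => e.toLinearMap ∘ F t := by
      have hF : (fun t : ℝ => e.toLinearMap ∘ F t) =
          fun t => e.toLinearMap ∘ F 0 + t • (e.toLinearMap ∘ D) := by
        funext t i
        induction i using Fin.lastCases <;> simp [F, D]
      rw [hF]
      fun_prop
    exact (hc.tendsto 0 |>.eventually (hF0.map' _ e.ker).eventually).mono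
      fun t ht => ht.of_comp _
  obtain ⟨t, hind, ht⟩ := ((hev.filter_mono nhdsWithin_le_nhds).and
    (self_mem_nhdsWithin : {t : ℝ | t ≠ 0} ∈ 𝓝[≠] 0)).exists
  have hmem : span ℝ (Set.range (F t)) ≤ range (f + t • g) := by
    rw [span_le]
    rintro _ ⟨i, rfl⟩
    induction i using Fin.lastCases with
    | last => exact ⟨t⁻¹ • z, by simp [F, hz, smul_smul, inv_mul_cancel₀ ht]⟩
    | cast i => exact ⟨y i, by simp [F]⟩
  have := Submodule.finrank_mono hmem
  rw [finrank_span_eq_card hind, Fintype.card_fin] at this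
  linarith [hmax t]

theorem LinearMap.exists_eq_smul_of_forall_mem_span_singleton {K V W : Type*} [Field K]
    [AddCommGroup V] [Module K V] [AddCommGroup W] [Module K W] {φ ψ : V →ₗ[K] W}
    (hψ : 1 < finrank K (range ψ)) (h : ∀ x, ψ x ≠ 0 → φ x ∈ K ∙ ψ x) :
    ∃ μ : K, φ = μ • ψ := by
  have hcoef : ∀ x, ψ x ≠ 0 → ∃ a : K, a • ψ x = φ x := fun x hx => mem_span_singleton.1 (h x hx)
  obtain ⟨x₀, hx₀⟩ : ∃ x₀, ψ x₀ ≠ 0 := by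
    have : range ψ ≠ ⊥ := fun h0 => by rw [h0, finrank_bot] at hψ; omega
    obtain ⟨_, ⟨x₀, rfl⟩, hx₀⟩ := Submodule.exists_mem_ne_zero_of_ne_bot this
    exact ⟨x₀, hx₀⟩
  obtain ⟨μ, hμ⟩ := hcoef x₀ hx₀
  set P := (K ∙ ψ x₀).comap ψ
  have hgood : ∀ x ∉ P, μ • ψ x = φ x := by
    intro x hx
    have hind : LinearIndependent K ![ψ x₀, ψ x] :=
      (LinearIndependent.pair_iff' hx₀).2 fun a ha => hx (mem_span_singleton.2 ⟨a, ha⟩)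
    obtain ⟨a, ha⟩ := hcoef x (hind.ne_zero 1)
    obtain ⟨c, hc⟩ := hcoef (x₀ + x) fun h0 => by
      simpa using (hind.eq_zero_of_pair (s := 1) (t := 1) (by simpa using h0)).1
    have := hind.eq_of_pair (s := μ) (t := a) (s' := c) (t' := c)
      (by rw [hμ, ha, ← map_add, ← hc, map_add, smul_add])
    rw [← ha, this.2, ← this.1]
  have hP : P ≠ ⊤ := by
    intro hP
    have : range ψ ≤ K ∙ ψ x₀ := range_le_iff_comap.2 hP
    have := (Submodule.finrank_mono this).trans (finrank_span_singleton hx₀).le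
    omega
  obtain ⟨y, hy⟩ : ∃ y, y ∉ P := by simpa [eq_top_iff'] using hP
  refine ⟨μ, LinearMap.ext fun x => ?_⟩
  by_cases hx : x ∈ P
  · have hxy : x + y ∉ P := fun hxy => hy (by simpa using P.sub_mem hxy hx)
    have := hgood _ hxy
    rw [map_add, map_add, smul_add, ← hgood y hy, add_left_inj] at this
    exact this.symm
  · exact (hgood x hx).symm

section AlternatingBilinear

variable {V W : Type*} [AddCommGroup V] [Module ℝ V] [AddCommGroup W] [Module ℝ W]
  [FiniteDimensional ℝ W] {B : V →ₗ[ℝ] V →ₗ[ℝ] W} {X₀ : V}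

theorem apply_mem_range_of_apply_eq_zero
    (hmax : ∀ x, finrank ℝ (range (B x)) ≤ finrank ℝ (range (B X₀)))
    (y : V) {z : V} (hz : B X₀ z = 0) : B y z ∈ range (B X₀) :=
  (B X₀).apply_mem_range_of_finrank_range_add_smul_le (B y)
    (fun t => by rw [← map_smul, ← map_add]; exact hmax _) hz

theorem range_eq_top_of_span_image_eq (halt : B.IsAlt) (hspan : map₂ B ⊤ ⊤ = ⊤)
    (hmax : ∀ x, finrank ℝ (range (B x)) ≤ finrank ℝ (range (B X₀))) {s : Set V}
    (hs : span ℝ (B X₀ '' s) = range (B X₀))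
    (hss : ∀ x ∈ s, ∀ y ∈ s, B x y ∈ range (B X₀)) : range (B X₀) = ⊤ := by
  set U := range (B X₀)
  have hsK : span ℝ s ⊔ ker (B X₀) = ⊤ := by
    rw [eq_top_iff, ← LinearMap.map_le_map_iff, Submodule.map_span, hs, ← range_eq_map]
  have hss' : ∀ x ∈ span ℝ s, ∀ y ∈ span ℝ s, B x y ∈ U := by
    refine map₂_le.1 ?_
    rw [map₂_span_span, span_le]
    rintro _ ⟨x, hx, y, hy, rfl⟩
    exact hss x hx y hy
  have hK : ∀ x, ∀ k ∈ ker (B X₀), B x k ∈ U ∧ B k x ∈ U := fun x k hk =>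
    have hxk := apply_mem_range_of_apply_eq_zero hmax x hk
    ⟨hxk, halt.neg x k ▸ U.neg_mem hxk⟩
  rw [eq_top_iff, ← hspan, map₂_le]
  intro m _ n _
  obtain ⟨t, ht, k, hk, rfl⟩ := mem_sup.1 (hsK ▸ mem_top : m ∈ span ℝ s ⊔ ker (B X₀))
  obtain ⟨t', ht', k', hk', rfl⟩ := mem_sup.1 (hsK ▸ mem_top : n ∈ span ℝ s ⊔ ker (B X₀))
  simp only [map_add, LinearMap.add_apply]
  exact add_mem (add_mem (hss' t ht t' ht') (hK t' k hk).2)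
    (add_mem (hK t k' hk').1 (hK k k' hk').1)

theorem range_eq_top_of_finrank_range_le_one (halt : B.IsAlt) (hspan : map₂ B ⊤ ⊤ = ⊤)
    (hmax : ∀ x, finrank ℝ (range (B x)) ≤ finrank ℝ (range (B X₀)))
    (h1 : finrank ℝ (range (B X₀)) ≤ 1) : range (B X₀) = ⊤ := by
  have := ((range (B X₀)).finrank_le_one_iff_isPrincipal).1 h1
  obtain ⟨v, hv⟩ := IsPrincipal.generator_mem (range (B X₀))
  refine range_eq_top_of_span_image_eq halt hspan hmax (s := {v}) ?_ ?_
  · rw [Set.image_singleton, hv, IsPrincipal.span_singleton_generator]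
  · simp only [Set.mem_singleton_iff, forall_eq, halt.self_eq_zero]
    exact zero_mem _

theorem apply_notMem_range_of_span_pair_eq (halt : B.IsAlt) (hspan : map₂ B ⊤ ⊤ = ⊤)
    (hmax : ∀ x, finrank ℝ (range (B x)) ≤ finrank ℝ (range (B X₀)))
    (hU : range (B X₀) ≠ ⊤) {v w : V} (hvw : span ℝ {B X₀ v, B X₀ w} = range (B X₀)) :
    B v w ∉ range (B X₀) := by
  refine fun hvwU => hU (range_eq_top_of_span_image_eq halt hspan hmax (s := {v, w})
    (by rw [Set.image_pair, hvw]) ?_)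
  simp only [Set.mem_insert_iff, Set.mem_singleton_iff]
  rintro x (rfl | rfl) y (rfl | rfl)
  all_goals first
    | rw [halt.self_eq_zero]; exact zero_mem _
    | exact hvwU
    | rw [← halt.neg]; exact (range (B X₀)).neg_mem hvwU

theorem exists_apply_notMem_range (halt : B.IsAlt) (hspan : map₂ B ⊤ ⊤ = ⊤)
    (hmax : ∀ x, finrank ℝ (range (B x)) ≤ finrank ℝ (range (B X₀)))
    (hU : range (B X₀) ≠ ⊤) (h2 : finrank ℝ (range (B X₀)) = 2) {x : V} (hx : B X₀ x ≠ 0) :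
    ∃ y, B x y ∉ range (B X₀) := by
  have hxU : ℝ ∙ B X₀ x < range (B X₀) := by
    refine lt_of_le_of_ne (span_le.2 (Set.singleton_subset_iff.2 (mem_range_self _ _))) fun h => ?_
    have := finrank_span_singleton (K := ℝ) hx
    rw [h, h2] at this
    omega
  obtain ⟨_, ⟨w, rfl⟩, hw⟩ := SetLike.exists_of_lt hxU
  refine ⟨w, apply_notMem_range_of_span_pair_eq halt hspan hmax hU
    (eq_of_le_of_finrank_le ?_ ?_)⟩
  · exact span_le.2 (Set.pair_subset_iff.2 ⟨mem_range_self _ _, mem_range_self _ _⟩)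
  · have hlt : ℝ ∙ B X₀ x < span ℝ {B X₀ x, B X₀ w} :=
      lt_of_le_of_ne (span_mono (by simp)) fun h => hw (h ▸ subset_span (by simp))
    have := finrank_lt_finrank_of_lt hlt
    rw [finrank_span_singleton hx] at this
    omega

theorem apply_mem_span_singleton_of_apply_eq_zero (halt : B.IsAlt) (hspan : map₂ B ⊤ ⊤ = ⊤)
    (hmax : ∀ x, finrank ℝ (range (B x)) ≤ finrank ℝ (range (B X₀)))
    (hU : range (B X₀) ≠ ⊤) (h2 : finrank ℝ (range (B X₀)) = 2) {z : V} (hz : B X₀ z = 0)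
    {x : V} (hx : B X₀ x ≠ 0) : B z x ∈ ℝ ∙ B X₀ x := by
  obtain ⟨y, hy⟩ := exists_apply_notMem_range halt hspan hmax hU h2 hx
  have hxX₀ : B x X₀ ≠ 0 := by rwa [← halt.neg, neg_ne_zero]
  have hline : range (B x) ⊓ range (B X₀) = ℝ ∙ B x X₀ := by
    refine (eq_of_le_of_finrank_le ?_ ?_).symm
    · refine span_le.2 (Set.singleton_subset_iff.2 ⟨mem_range_self _ _, ?_⟩)
      rw [← halt.neg]
      exact (range (B X₀)).neg_mem (mem_range_self _ _)
    · have := finrank_lt_finrank_of_lt (inf_lt_left.2 fun h => hy (h (mem_range_self _ y)))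
      rw [finrank_span_singleton hxX₀]
      linarith [hmax x]
  have hxz : B x z ∈ ℝ ∙ B x X₀ :=
    hline ▸ ⟨mem_range_self _ _, apply_mem_range_of_apply_eq_zero hmax x hz⟩
  rwa [← halt.neg x z, ← halt.neg x X₀, ← Set.neg_singleton, span_neg, neg_mem_iff]

theorem range_eq_top_of_finrank_range_eq_two [FiniteDimensional ℝ V] (halt : B.IsAlt)
    (hspan : map₂ B ⊤ ⊤ = ⊤) (hsep : B.SeparatingLeft)
    (hmax : ∀ x, finrank ℝ (range (B x)) ≤ finrank ℝ (range (B X₀)))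
    (h2 : finrank ℝ (range (B X₀)) = 2) (hV : 3 < finrank ℝ V) : range (B X₀) = ⊤ := by
  by_contra hU
  have hker : ker (B X₀) ≤ ℝ ∙ X₀ := by
    intro z hz
    obtain ⟨μ, hμ⟩ := exists_eq_smul_of_forall_mem_span_singleton (by omega)
      fun x => apply_mem_span_singleton_of_apply_eq_zero halt hspan hmax hU h2 hz
    have : z - μ • X₀ = 0 := hsep _ fun y => by simp [hμ]
    exact mem_span_singleton.2 ⟨μ, (sub_eq_zero.1 this).symm⟩
  have hK1 : finrank ℝ (ker (B X₀)) ≤ 1 := by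
    simpa using (Submodule.finrank_mono hker).trans (finrank_span_le_card ({X₀} : Set V))
  have := finrank_range_add_finrank_ker (B X₀)
  omega

theorem exists_surjective_of_finrank_le_three [FiniteDimensional ℝ V] (halt : B.IsAlt)
    (hspan : map₂ B ⊤ ⊤ = ⊤) (hsep : B.SeparatingLeft) (h3 : finrank ℝ W ≤ 3)
    (hdim : finrank ℝ W < finrank ℝ V) : ∃ x, Function.Surjective (B x) := by
  obtain ⟨X₀, hmax⟩ : ∃ X₀, ∀ x, finrank ℝ (range (B x)) ≤ finrank ℝ (range (B X₀)) := by
    have hbdd : BddAbove (Set.range fun x => finrank ℝ (range (B x))) :=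
      ⟨finrank ℝ W, by rintro _ ⟨x, rfl⟩; exact Submodule.finrank_le _⟩
    obtain ⟨X₀, hX₀⟩ := Nat.sSup_mem (Set.range_nonempty _) hbdd
    exact ⟨X₀, fun x => (le_csSup hbdd ⟨x, rfl⟩).trans_eq hX₀.symm⟩
  refine ⟨X₀, range_eq_top.1 ?_⟩
  by_contra hU
  have hlt := Submodule.finrank_lt hU
  rcases le_or_gt (finrank ℝ (range (B X₀))) 1 with h1 | h2
  · exact hU (range_eq_top_of_finrank_range_le_one halt hspan hmax h1)
  · exact hU (range_eq_top_of_finrank_range_eq_two halt hspan hsep hmax (by omega) (by omega))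

end AlternatingBilinear

namespace IsStep2FGLA

variable {L : Type*} [LieRing L] [LieAlgebra ℝ L] {m1 m2 : Submodule ℝ L}

def bracket (h : IsStep2FGLA L m1 m2) : m1 →ₗ[ℝ] m1 →ₗ[ℝ] m2 :=
  LinearMap.mk₂ ℝ
    (fun x y => ⟨⁅(x : L), (y : L)⁆,
      by rw [h.span_brackets]; exact subset_span ⟨x, x.2, y, y.2, rfl⟩⟩)
    (fun _ _ _ => Subtype.ext (add_lie _ _ _)) (fun _ _ _ => Subtype.ext (smul_lie _ _ _))
    (fun _ _ _ => Subtype.ext (lie_add _ _ _)) (fun _ _ _ => Subtype.ext (lie_smul _ _ _))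

@[simp]
theorem coe_bracket_apply (h : IsStep2FGLA L m1 m2) (x y : m1) :
    (h.bracket x y : L) = ⁅(x : L), (y : L)⁆ :=
  rfl

theorem isAlt_bracket (h : IsStep2FGLA L m1 m2) : h.bracket.IsAlt :=
  fun x => Subtype.ext (lie_self (x : L))

theorem map₂_bracket_top (h : IsStep2FGLA L m1 m2) : map₂ h.bracket ⊤ ⊤ = ⊤ := by
  apply map_injective_of_injective m2.injective_subtype
  rw [map_subtype_top, ← span_univ, map₂_span_span, Submodule.map_span]
  conv_rhs => rw [h.span_brackets]
  congr 1
  ext z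
  constructor
  · rintro ⟨_, ⟨x, -, y, -, rfl⟩, rfl⟩
    exact ⟨x, x.2, y, y.2, rfl⟩
  · rintro ⟨x, hx, y, hy, rfl⟩
    exact ⟨h.bracket ⟨x, hx⟩ ⟨y, hy⟩, ⟨_, trivial, _, trivial, rfl⟩, rfl⟩

theorem separatingLeft_bracket (h : IsStep2FGLA L m1 m2)
    (hcenter : ∀ x ∈ m1, (∀ y : L, ⁅x, y⁆ = 0) → x = 0) : h.bracket.SeparatingLeft := by
  intro x hx
  refine Subtype.ext (hcenter x x.2 fun y => ?_)
  obtain ⟨y1, hy1, y2, hy2, rfl⟩ := mem_sup.1 (h.compl.sup_eq_top ▸ mem_top : y ∈ m1 ⊔ m2)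
  rw [lie_add, h.bracket_m1_m2 x x.2 y2 hy2, add_zero]
  simpa using congr_arg Subtype.val (hx ⟨y1, hy1⟩)

end IsStep2FGLA

/-- If `dim 𝔪₋₂ ≤ 3`, `dim 𝔪₋₂ < dim 𝔪₋₁` and `𝔪₋₁` meets the center of `𝔪`
trivially, then the step 2 fundamental graded Lie algebra `𝔪 = 𝔪₋₁ ⊕ 𝔪₋₂` is
ad-surjective: there is `X ∈ 𝔪₋₁` with `ad X : 𝔪₋₁ → 𝔪₋₂` surjective. -/
theorem adSurjective_of_dim_le_three (L : Type*) [LieRing L] [LieAlgebra ℝ L]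
    [FiniteDimensional ℝ L] (m1 m2 : Submodule ℝ L)
    (h : IsStep2FGLA L m1 m2)
    (hdim3 : Module.finrank ℝ ↥m2 ≤ 3)
    (hdim : Module.finrank ℝ ↥m2 < Module.finrank ℝ ↥m1)
    (hcenter : ∀ x ∈ m1, (∀ y : L, ⁅x, y⁆ = 0) → x = 0) :
    ∃ X ∈ m1, ∀ z ∈ m2, ∃ Y ∈ m1, ⁅X, Y⁆ = z := by
  obtain ⟨X, hX⟩ := exists_surjective_of_finrank_le_three h.isAlt_bracket h.map₂_bracket_top
    (h.separatingLeft_bracket hcenter) hdim3 hdim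
  refine ⟨X, X.2, fun z hz => ?_⟩
  obtain ⟨Y, hY⟩ := hX ⟨z, hz⟩
  exact ⟨Y, Y.2, congr_arg Subtype.val hY⟩
end

section
/- Let 𝔪 = 𝔪₋₁ ⊕ 𝔪₋₂ be an ad-surjective step 2 fundamental graded Lie algebra over ℝ, and suppose 𝔪 is decomposed as a direct sum of finitely many Lie ideals 𝔪¹, …, 𝔪ᵏ that pairwise commute (⁅𝔪ⁱ, 𝔪ʲ⁆ = 0 for i ≠ j), are compatible with the grading (𝔪₋ⱼ = ⊕ᵢ (𝔪ⁱ ∩ 𝔪₋ⱼ) for j = 1, 2), and each of which is a fundamental graded Lie algebra with components 𝔪ⁱ ∩ 𝔪₋ⱼ. Then every component 𝔪ⁱ is ad-surjective; more precisely, if X ∈ 𝔪₋₁ is an ad-generating element of 𝔪, then the projection of X to 𝔪ⁱ ∩ 𝔪₋₁ is an ad-generating element of 𝔪ⁱ. -/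
theorem lie_sum_sum_eq_sum_lie_of_pairwise {L : Type*} [LieRing L] {ι : Type*} (s : Finset ι)
    (x y : ι → L) (hxy : ∀ i j, i ≠ j → ⁅x i, y j⁆ = 0) :
    ⁅∑ i ∈ s, x i, ∑ j ∈ s, y j⁆ = ∑ i ∈ s, ⁅x i, y i⁆ := by
  rw [sum_lie_sum]
  exact Finset.sum_congr rfl fun i hi =>
    Finset.sum_eq_single_of_mem i hi fun j _ hji => hxy i j hji.symm

namespace Submodule

variable {R M ι : Type*} [Ring R] [AddCommGroup M] [Module R M] [Fintype ι]

theorem mem_iSup_iff_exists_fintype_sum (p : ι → Submodule R M) (a : M) :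
    a ∈ ⨆ i, p i ↔ ∃ v : ι → M, (∀ i, v i ∈ p i) ∧ ∑ i, v i = a := by
  constructor
  · intro ha
    have hfin := mem_iSup_finset_iff_exists_sum (s := Finset.univ) p a
    simp only [Finset.mem_univ, iSup_pos] at hfin
    obtain ⟨μ, hμ⟩ := hfin.1 ha
    exact ⟨fun i => μ i, fun i => (μ i).2, hμ⟩
  · rintro ⟨v, hv, rfl⟩
    exact sum_mem_iSup hv

end Submodule

theorem iSupIndep.eq_of_mem_of_eq_sum {R M ι : Type*} [Ring R] [AddCommGroup M] [Module R M]
    [Fintype ι] {p : ι → Submodule R M} (hp : iSupIndep p) {w : ι → M} (hw : ∀ j, w j ∈ p j)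
    {i : ι} {z : M} (hz : z ∈ p i) (hsum : z = ∑ j, w j) : z = w i := by
  classical
  have hcomp := (iSupIndep_iff_finsetSum_eq_imp_eq p).1 hp Finset.univ (Pi.single i z) w
    (fun j _ => ⟨by by_cases hj : j = i <;> simp [hj, hz], hw j⟩)
    (by rwa [Finset.sum_pi_single', if_pos (Finset.mem_univ i)]) i (Finset.mem_univ i)
  simpa using hcomp

theorem components_adSurjective_of_adSurjective_general
    (L : Type*) [LieRing L] [LieAlgebra ℝ L]
    (m1 m2 : Submodule ℝ L)
    (k : ℕ) (p : Fin k → Submodule ℝ L)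
    (hideal : ∀ i, ∀ x : L, ∀ y ∈ p i, ⁅x, y⁆ ∈ p i)
    (hcomm : ∀ i j, i ≠ j → ∀ x ∈ p i, ∀ y ∈ p j, ⁅x, y⁆ = 0)
    (hindep : iSupIndep p)
    (hgrade1 : m1 = ⨆ i, (p i ⊓ m1))
    (X : L) (hXgen : ∀ z ∈ m2, ∃ Y ∈ m1, ⁅X, Y⁆ = z)
    (x : Fin k → L) (hx : ∀ i, x i ∈ p i ⊓ m1) (hXsum : X = ∑ i, x i) :
    ∀ i, ∀ z ∈ p i ⊓ m2, ∃ Y ∈ p i ⊓ m1, ⁅x i, Y⁆ = z := by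
  intro i z hz
  obtain ⟨Y, hY, hYz⟩ := hXgen z hz.2
  rw [hgrade1, Submodule.mem_iSup_iff_exists_fintype_sum] at hY
  obtain ⟨y, hy, rfl⟩ := hY
  have hbracket : ⁅X, ∑ j, y j⁆ = ∑ j, ⁅x j, y j⁆ := by
    rw [hXsum]
    exact lie_sum_sum_eq_sum_lie_of_pairwise _ x y
      fun a b hab => hcomm a b hab _ (hx a).1 _ (hy b).1
  refine ⟨y i, hy i, ?_⟩
  exact (hindep.eq_of_mem_of_eq_sum (fun j => hideal j _ _ (hy j).1) hz.1
    (hYz ▸ hbracket)).symm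

/-- If an ad-surjective step 2 fundamental graded Lie algebra `𝔪 = 𝔪₋₁ ⊕ 𝔪₋₂` is a
direct sum of finitely many pairwise commuting graded Lie ideals `𝔪¹, …, 𝔪ᵏ`, each of
which is a fundamental graded Lie algebra with components `𝔪ⁱ ∩ 𝔪₋ⱼ`, then every
component `𝔪ⁱ` is ad-surjective; more precisely, if `X` is an ad-generating element
of `𝔪`, then the projection `x i` of `X` to `𝔪ⁱ ∩ 𝔪₋₁` is an ad-generating element
of `𝔪ⁱ`. -/
theorem components_adSurjective_of_adSurjective
    (L : Type*) [LieRing L] [LieAlgebra ℝ L] [FiniteDimensional ℝ L]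
    (m1 m2 : Submodule ℝ L) (h : IsStep2FGLA L m1 m2)
    (k : ℕ) (p : Fin k → Submodule ℝ L)
    (hideal : ∀ i, ∀ x : L, ∀ y ∈ p i, ⁅x, y⁆ ∈ p i)
    (hcomm : ∀ i j, i ≠ j → ∀ x ∈ p i, ∀ y ∈ p j, ⁅x, y⁆ = 0)
    (hindep : iSupIndep p) (hspan : ⨆ i, p i = ⊤)
    (hgrade1 : m1 = ⨆ i, (p i ⊓ m1)) (hgrade2 : m2 = ⨆ i, (p i ⊓ m2))
    (hfund : ∀ i, Submodule.span ℝ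
        {z : L | ∃ x ∈ p i ⊓ m1, ∃ y ∈ p i ⊓ m1, ⁅x, y⁆ = z} = p i ⊓ m2)
    (X : L) (hX1 : X ∈ m1) (hXgen : ∀ z ∈ m2, ∃ Y ∈ m1, ⁅X, Y⁆ = z)
    (x : Fin k → L) (hx : ∀ i, x i ∈ p i ⊓ m1) (hXsum : X = ∑ i, x i) :
    ∀ i, ∀ z ∈ p i ⊓ m2, ∃ Y ∈ p i ⊓ m1, ⁅x i, Y⁆ = z :=
  components_adSurjective_of_adSurjective_general L m1 m2 k p hideal hcomm hindep hgrade1 X hXgen x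
    hx hXsum
end

section
/- Let 𝔪 = 𝔪₋₁ ⊕ 𝔪₋₂ be a step 2 fundamental graded Lie algebra over ℝ, and let X₁ ∈ 𝔪₋₁ be an element at which the rank of ad X (X ∈ 𝔪₋₁) is maximal, i.e., rank(ad X₁) = max{rank(ad X) : X ∈ 𝔪₋₁}, where ad X : 𝔪₋₁ → 𝔪₋₂. Then ⁅ker(ad X₁), 𝔪₋₁⁆ ⊆ Im(ad X₁); that is, for every Y ∈ 𝔪₋₁ with ⁅X₁, Y⁆ = 0 and every Z ∈ 𝔪₋₁, there exists W ∈ 𝔪₋₁ with ⁅Y, Z⁆ = ⁅X₁, W⁆. -/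
/-- The rank of `ad X : 𝔪₋₁ → 𝔪₋₂`, i.e. the dimension of the image `⁅X, 𝔪₋₁⁆`. -/
noncomputable def adRank (L : Type*) [LieRing L] [LieAlgebra ℝ L]
    (m1 : Submodule ℝ L) (X : L) : ℕ :=
  Module.finrank ℝ ↥(m1.map (LieAlgebra.ad ℝ L X))

open Module LinearMap Filter Topology

namespace LinearMap

theorem finrank_range_arrowCongr {R V W V' W' : Type*} [CommRing R]
    [AddCommGroup V] [Module R V] [AddCommGroup W] [Module R W]
    [AddCommGroup V'] [Module R V'] [AddCommGroup W'] [Module R W']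
    (eV : V ≃ₗ[R] V') (eW : W ≃ₗ[R] W') (f : V →ₗ[R] W) :
    finrank R (range (LinearEquiv.arrowCongr eV eW f)) = finrank R (range f) := by
  have : LinearEquiv.arrowCongr eV eW f = (eW.toLinearMap ∘ₗ f) ∘ₗ eV.symm.toLinearMap := rfl
  rw [this, range_comp_of_range_eq_top _ (LinearEquiv.range _), range_comp,
    LinearEquiv.finrank_map_eq]

variable {𝕜 V W : Type*} [NontriviallyNormedField 𝕜] [CompleteSpace 𝕜]
  [AddCommGroup V] [Module 𝕜 V] [FiniteDimensional 𝕜 V]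
  [AddCommGroup W] [Module 𝕜 W] [FiniteDimensional 𝕜 W]

theorem lowerSemicontinuous_finrank_range_add_smul (A E : V →ₗ[𝕜] W) :
    LowerSemicontinuous fun s : 𝕜 => finrank 𝕜 (range (A + s • E)) := by
  -- `isOpen_setOfPred_nat_le_rank` is about normed spaces, so pass to coordinates.
  let toCoordinates := (LinearEquiv.arrowCongr (finBasis 𝕜 V).equivFun
    (finBasis 𝕜 W).equivFun).trans LinearMap.toContinuousLinearMap
  have hcont : Continuous fun s : 𝕜 => toCoordinates (A + s • E) := by
    simp only [map_add, map_smul]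
    fun_prop
  have hrank (f : V →ₗ[𝕜] W) :
      (toCoordinates f).toLinearMap.rank = finrank 𝕜 (range f) := by
    rw [LinearMap.rank, ← finrank_eq_rank, ← finrank_range_arrowCongr (finBasis 𝕜 V).equivFun
      (finBasis 𝕜 W).equivFun]
    rfl
  intro s₀ n hn
  have hopen := (isOpen_setOfPred_nat_le_rank (n + 1)).preimage hcont
  filter_upwards [hopen.mem_nhds (by
    simpa only [Set.mem_preimage, Set.mem_ofPred_eq, hrank, Nat.cast_le, Nat.add_one_le_iff]
      using hn)] with s hs
  simpa only [Set.mem_preimage, Set.mem_ofPred_eq, hrank, Nat.cast_le, Nat.add_one_le_iff]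
    using hs

theorem apply_mem_range_of_eventually_finrank_range_add_smul_le (A E : V →ₗ[𝕜] W)
    (hmax : ∀ᶠ s in 𝓝 (0 : 𝕜), finrank 𝕜 (range (A + s • E)) ≤ finrank 𝕜 (range A))
    {y : V} (hy : A y = 0) : E y ∈ range A := by
  by_contra hEy
  let A' : V × 𝕜 →ₗ[𝕜] W := A.coprod (toSpanSingleton 𝕜 W (E y))
  let E' : V × 𝕜 →ₗ[𝕜] W := E ∘ₗ fst 𝕜 V 𝕜
  have hlt : range A < range A' := by
    refine SetLike.lt_iff_le_and_exists.2 ⟨?_, E y, ⟨(0, 1), by simp [A']⟩, hEy⟩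
    simpa [A'] using range_comp_le_range (inl 𝕜 V 𝕜) A'
  have hsub (s : 𝕜) (hs : s ≠ 0) : range (A' + s • E') ≤ range (A + s • E) := by
    rintro _ ⟨⟨v, t⟩, rfl⟩
    refine ⟨v + (s⁻¹ * t) • y, ?_⟩
    simp only [A', E', add_apply, map_add, map_smul, hy, smul_zero, smul_apply, smul_add,
      smul_smul, coprod_apply, toSpanSingleton_apply, coe_comp, coe_fst, Function.comp_apply]
    rw [mul_comm s⁻¹ t, inv_mul_cancel_right₀ hs, zero_add, add_right_comm]
  have hgt : ∀ᶠ s in 𝓝 (0 : 𝕜), finrank 𝕜 (range A) < finrank 𝕜 (range (A' + s • E')) := by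
    refine lowerSemicontinuous_finrank_range_add_smul A' E' 0 _ ?_
    show finrank 𝕜 (range A) < finrank 𝕜 (range (A' + (0 : 𝕜) • E'))
    rw [zero_smul, add_zero]
    exact Submodule.finrank_lt_finrank_of_lt hlt
  obtain ⟨s, ⟨hA', hA⟩, hs⟩ :=
    ((hgt.and hmax).filter_mono nhdsWithin_le_nhds |>.and self_mem_nhdsWithin).exists
      (f := 𝓝[≠] (0 : 𝕜))
  have := Submodule.finrank_mono (hsub s hs)
  omega

end LinearMap

theorem adRank_eq_finrank_range (L : Type*) [LieRing L] [LieAlgebra ℝ L]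
    (m1 : Submodule ℝ L) (X : L) :
    adRank L m1 X = finrank ℝ (range (LieAlgebra.ad ℝ L X ∘ₗ m1.subtype)) := by
  rw [adRank, range_comp, Submodule.range_subtype]

theorem bracket_ker_subset_image_of_maxRank_general
    (L : Type*) [LieRing L] [LieAlgebra ℝ L] [FiniteDimensional ℝ L]
    (m1 : Submodule ℝ L)
    (X₁ : L) (hX₁ : X₁ ∈ m1)
    (hmax : ∀ X ∈ m1, adRank L m1 X ≤ adRank L m1 X₁) :
    ∀ Y ∈ m1, ⁅X₁, Y⁆ = 0 → ∀ Z ∈ m1, ∃ W ∈ m1, ⁅Y, Z⁆ = ⁅X₁, W⁆ := by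
  intro Y hY hX₁Y Z hZ
  let adOn (X : L) : m1 →ₗ[ℝ] L := LieAlgebra.ad ℝ L X ∘ₗ m1.subtype
  have hline (s : ℝ) : adOn X₁ + s • adOn Z = adOn (X₁ + s • Z) := by
    simp only [adOn, map_add, map_smul, add_comp, smul_comp]
  have hrank : ∀ᶠ s in 𝓝 (0 : ℝ),
      finrank ℝ (range (adOn X₁ + s • adOn Z)) ≤ finrank ℝ (range (adOn X₁)) :=
    .of_forall fun s => by
      rw [hline, ← adRank_eq_finrank_range, ← adRank_eq_finrank_range]
      exact hmax _ (m1.add_mem hX₁ (m1.smul_mem s hZ))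
  obtain ⟨⟨w, hw⟩, hXw⟩ :=
    apply_mem_range_of_eventually_finrank_range_add_smul_le _ _ hrank
      (y := ⟨Y, hY⟩) hX₁Y
  refine ⟨-w, m1.neg_mem hw, ?_⟩
  simp only [adOn, comp_apply, Submodule.subtype_apply, LieAlgebra.ad_apply] at hXw
  rw [lie_neg, hXw, lie_skew]

/-- If `X₁ ∈ 𝔪₋₁` is a point where the rank of `ad X` (`X ∈ 𝔪₋₁`) is maximal, then
`⁅ker (ad X₁), 𝔪₋₁⁆ ⊆ Im (ad X₁)`: for every `Y ∈ 𝔪₋₁` with `⁅X₁, Y⁆ = 0` and every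
`Z ∈ 𝔪₋₁` there is `W ∈ 𝔪₋₁` with `⁅Y, Z⁆ = ⁅X₁, W⁆`. -/
theorem bracket_ker_subset_image_of_maxRank
    (L : Type*) [LieRing L] [LieAlgebra ℝ L] [FiniteDimensional ℝ L]
    (m1 m2 : Submodule ℝ L) (h : IsStep2FGLA L m1 m2)
    (X₁ : L) (hX₁ : X₁ ∈ m1)
    (hmax : ∀ X ∈ m1, adRank L m1 X ≤ adRank L m1 X₁) :
    ∀ Y ∈ m1, ⁅X₁, Y⁆ = 0 → ∀ Z ∈ m1, ∃ W ∈ m1, ⁅Y, Z⁆ = ⁅X₁, W⁆ :=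
  bracket_ker_subset_image_of_maxRank_general L m1 X₁ hX₁ hmax
end

section
/- Let 𝔪 = 𝔪₋₁ ⊕ 𝔪₋₂ be a step 2 fundamental graded Lie algebra over ℝ such that max{rank(ad X) : X ∈ 𝔪₋₁} = 1, where ad X : 𝔪₋₁ → 𝔪₋₂. Then dim 𝔪₋₂ = 1; in particular, 𝔪₋₂ = Im(ad X₁) for any X₁ ∈ 𝔪₋₁ with rank(ad X₁) = 1, and 𝔪 is ad-surjective. -/
/-!
Pick `X, Y ∈ 𝔪₋₁` with `Z = ⁅X, Y⁆ ≠ 0`. If `ad u` has rank at most one and some `⁅u, p⁆` is a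
nonzero multiple of `Z`, then the whole image of `ad u` is the line `ℝ Z`. This applies to `X`
and `Y`, hence `⁅x, Y⁆ ∈ ℝ Z` for every `x ∈ 𝔪₋₁`; and one of `x`, `x + X` brackets nontrivially
with `Y`, since the two brackets differ by `Z`. So `ad x` maps into `ℝ Z` as well, and `𝔪₋₂`,
being spanned by brackets, is the line `ℝ Z`.
-/

open LieAlgebra

section

variable {L : Type*} [LieRing L] [LieAlgebra ℝ L] {m1 : Submodule ℝ L}

theorem exists_lie_ne_zero_of_adRank_eq_one [FiniteDimensional ℝ L] {X : L}
    (hX : adRank L m1 X = 1) : ∃ Y ∈ m1, ⁅X, Y⁆ ≠ 0 := by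
  have hne : m1.map (ad ℝ L X) ≠ ⊥ := by
    rw [Ne, ← Submodule.finrank_eq_zero, ← adRank, hX]
    exact one_ne_zero
  obtain ⟨_, ⟨Y, hY, rfl⟩, hZ⟩ := Submodule.exists_mem_ne_zero_of_ne_bot hne
  exact ⟨Y, hY, hZ⟩

theorem map_ad_eq_span_of_adRank_le_one [FiniteDimensional ℝ L] {u p : L}
    (hu : adRank L m1 u ≤ 1) (hp : p ∈ m1) (hne : ⁅u, p⁆ ≠ 0) :
    m1.map (ad ℝ L u) = ℝ ∙ ⁅u, p⁆ := by
  have hmem : ⁅u, p⁆ ∈ m1.map (ad ℝ L u) := ⟨p, hp, rfl⟩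
  refine (Submodule.eq_of_le_of_finrank_le ?_ ?_).symm
  · exact (Submodule.span_singleton_le_iff_mem _ _).mpr hmem
  · rw [finrank_span_singleton hne]
    exact hu

theorem lie_mem_of_adRank_le_one [FiniteDimensional ℝ L] {S : Submodule ℝ L} {u p : L}
    (hu : adRank L m1 u ≤ 1) (hp : p ∈ m1) (hne : ⁅u, p⁆ ≠ 0) (hS : ⁅u, p⁆ ∈ S)
    {q : L} (hq : q ∈ m1) : ⁅u, q⁆ ∈ S := by
  have hq' : ⁅u, q⁆ ∈ m1.map (ad ℝ L u) := ⟨q, hq, rfl⟩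
  rw [map_ad_eq_span_of_adRank_le_one hu hp hne] at hq'
  exact (Submodule.span_singleton_le_iff_mem _ _).mpr hS hq'

theorem lie_mem_span_of_adRank_le_one [FiniteDimensional ℝ L]
    (hle : ∀ X ∈ m1, adRank L m1 X ≤ 1) {X Y : L} (hX : X ∈ m1) (hY : Y ∈ m1)
    (hZ : ⁅X, Y⁆ ≠ 0) {x y : L} (hx : x ∈ m1) (hy : y ∈ m1) :
    ⁅x, y⁆ ∈ ℝ ∙ ⁅X, Y⁆ := by
  set S := ℝ ∙ ⁅X, Y⁆
  have hZS : ⁅X, Y⁆ ∈ S := Submodule.mem_span_singleton_self _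
  have hXS : ∀ q ∈ m1, ⁅X, q⁆ ∈ S := fun q hq ↦
    lie_mem_of_adRank_le_one (hle X hX) hY hZ hZS hq
  have hYX : ⁅Y, X⁆ = -⁅X, Y⁆ := (lie_skew Y X).symm
  have hYS : ∀ q ∈ m1, ⁅q, Y⁆ ∈ S := fun q hq ↦ by
    rw [← lie_skew]
    refine S.neg_mem (lie_mem_of_adRank_le_one (hle Y hY) hX ?_ ?_ hq)
    · rwa [hYX, neg_ne_zero]
    · rw [hYX]; exact S.neg_mem hZS
  have hadS : ∀ u ∈ m1, ⁅u, Y⁆ ≠ 0 → ⁅u, y⁆ ∈ S := fun u hu hne ↦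
    lie_mem_of_adRank_le_one (hle u hu) hY hne (hYS u hu) hy
  by_cases hxY : ⁅x, Y⁆ = 0
  · have hxXY : ⁅x + X, Y⁆ ≠ 0 := by rwa [add_lie, hxY, zero_add]
    have h := S.sub_mem (hadS _ (m1.add_mem hx hX) hxXY) (hXS y hy)
    rwa [add_lie, add_sub_cancel_right] at h
  · exact hadS x hx hxY

namespace IsStep2FGLA

variable {m2 : Submodule ℝ L}

theorem lie_mem (h : IsStep2FGLA L m1 m2) {x y : L} (hx : x ∈ m1) (hy : y ∈ m1) :
    ⁅x, y⁆ ∈ m2 :=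
  h.span_brackets ▸ Submodule.subset_span ⟨x, hx, y, hy, rfl⟩

theorem map_ad_le (h : IsStep2FGLA L m1 m2) {x : L} (hx : x ∈ m1) :
    m1.map (ad ℝ L x) ≤ m2 := by
  rintro _ ⟨y, hy, rfl⟩
  exact h.lie_mem hx hy

theorem eq_span_of_adRank_le_one [FiniteDimensional ℝ L] (h : IsStep2FGLA L m1 m2)
    (hle : ∀ X ∈ m1, adRank L m1 X ≤ 1) {X Y : L} (hX : X ∈ m1) (hY : Y ∈ m1)
    (hZ : ⁅X, Y⁆ ≠ 0) : m2 = ℝ ∙ ⁅X, Y⁆ := by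
  refine le_antisymm ?_ ((Submodule.span_singleton_le_iff_mem _ _).mpr (h.lie_mem hX hY))
  rw [h.span_brackets, Submodule.span_le]
  rintro _ ⟨x, hx, y, hy, rfl⟩
  exact lie_mem_span_of_adRank_le_one hle hX hY hZ hx hy

end IsStep2FGLA

end

/-- If the maximal rank of `ad X : 𝔪₋₁ → 𝔪₋₂` over `X ∈ 𝔪₋₁` equals `1`, then
`dim 𝔪₋₂ = 1`; in particular `𝔪₋₂ = Im (ad X₁)` for any `X₁ ∈ 𝔪₋₁` with
`rank (ad X₁) = 1`, and `𝔪` is ad-surjective. -/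
theorem dim_m2_eq_one_of_maxRank_one
    (L : Type*) [LieRing L] [LieAlgebra ℝ L] [FiniteDimensional ℝ L]
    (m1 m2 : Submodule ℝ L) (h : IsStep2FGLA L m1 m2)
    (hle : ∀ X ∈ m1, adRank L m1 X ≤ 1)
    (hex : ∃ X ∈ m1, adRank L m1 X = 1) :
    Module.finrank ℝ ↥m2 = 1 ∧
      (∀ X₁ ∈ m1, adRank L m1 X₁ = 1 → m1.map (LieAlgebra.ad ℝ L X₁) = m2) ∧
      (∃ X ∈ m1, ∀ z ∈ m2, ∃ Y ∈ m1, ⁅X, Y⁆ = z) := by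
  obtain ⟨X, hX, hX1⟩ := hex
  obtain ⟨Y, hY, hZ⟩ := exists_lie_ne_zero_of_adRank_eq_one hX1
  have hdim : Module.finrank ℝ m2 = 1 := by
    rw [h.eq_span_of_adRank_le_one hle hX hY hZ, finrank_span_singleton hZ]
  have himage : ∀ X₁ ∈ m1, adRank L m1 X₁ = 1 → m1.map (ad ℝ L X₁) = m2 :=
    fun X₁ hX₁ hrank ↦ Submodule.eq_of_le_of_finrank_le (h.map_ad_le hX₁)
      (by rw [hdim, ← hrank]; rfl)
  refine ⟨hdim, himage, X, hX, fun z hz ↦ ?_⟩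
  obtain ⟨Y', hY', hz⟩ := (himage X hX hX1).symm ▸ hz
  exact ⟨Y', hY', hz⟩
end

section
/- Fix nonzero real numbers β, δ, λ, and let 𝔪 be the 9-dimensional real Lie algebra with basis X₁, X₂, X₃, X₄, X₅, Y₁, Y₂, Y₃, Y₄ whose only nonzero brackets of basis elements (up to skew-symmetry) are ⁅X₁, Xᵢ⁆ = Y_{i−1} for i = 2, 3, 4, ⁅X₂, X₃⁆ = Y₄, ⁅X₂, X₅⁆ = β·Y₃, ⁅X₃, X₅⁆ = δ·Y₃, and ⁅X₄, X₅⁆ = λ·Y₃. Then, with 𝔪₋₁ := span{X₁, …, X₅} and 𝔪₋₂ := span{Y₁, …, Y₄}, 𝔪 is a step 2 fundamental graded Lie algebra with dim 𝔪₋₁ = 5 and dim 𝔪₋₂ = 4 such that 𝔪₋₁ ∩ Z(𝔪) = 0 and 𝔪 is NOT ad-surjective; in fact max{rank(ad X) : X ∈ 𝔪₋₁} = 3 < 4 = dim 𝔪₋₂. -/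
/-!
Write `Z = ∑ cᵢ • X i` (indices start at `0`). The brackets `⁅Z, X 3⁆` and `⁅Z, X 4⁆` are
multiples of `Y 2`. If `c₀ ≠ 0`, then `⁅Z, Z⁆ = 0` expresses `⁅Z, X 0⁆` through `⁅Z, X 1⁆`,
`⁅Z, X 2⁆` and `Y 2`; if `c₀ = 0`, then `Z ∈ span {X 1, …, X 4}`, whose brackets lie in
`span {Y 2, Y 3}`, so `⁅Z, X j⁆ ∈ span {Y 2, Y 3}` for `j ≠ 0`. Either way the image of `ad Z`
is spanned by three vectors, so it never exhausts the four-dimensional `𝔪₋₂`, while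
`ad (X 0)` has image `span {Y 0, Y 1, Y 2}`.
-/

open Submodule Set

theorem lie_mem_of_mem_span {R L : Type*} [CommRing R] [LieRing L] [LieAlgebra R L]
    {s t : Set L} {N : Submodule R L} (h : ∀ x ∈ s, ∀ y ∈ t, ⁅x, y⁆ ∈ N) {x y : L}
    (hx : x ∈ span R s) (hy : y ∈ span R t) : ⁅x, y⁆ ∈ N := by
  have : map₂ (LieAlgebra.ad R L : L →ₗ[R] Module.End R L) (span R s) (span R t) ≤ N := by
    rw [map₂_span_span, span_le]
    rintro _ ⟨a, ha, b, hb, rfl⟩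
    exact h a ha b hb
  exact map₂_le.mp this x hx y hy

theorem lie_mem_of_forall_lt {R L ι : Type*} [CommRing R] [LieRing L] [LieAlgebra R L]
    [LinearOrder ι] {v : ι → L} {N : Submodule R L} (h : ∀ i j, i < j → ⁅v i, v j⁆ ∈ N)
    (i j : ι) : ⁅v i, v j⁆ ∈ N := by
  rcases lt_trichotomy i j with hij | rfl | hij
  · exact h i j hij
  · simp
  · rw [← lie_skew]
    exact N.neg_mem (h j i hij)

theorem finrank_map_span_range_le {K V W ι : Type*} [DivisionRing K] [AddCommGroup V] [Module K V]
    [AddCommGroup W] [Module K W] [Fintype ι] (f : V →ₗ[K] W) (v : ι → V) {k : ℕ}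
    (w : Fin k → W) (h : ∀ i, f (v i) ∈ span K (range w)) :
    Module.finrank K (map f (span K (range v))) ≤ k := by
  calc Module.finrank K (map f (span K (range v)))
      ≤ Module.finrank K (span K (range w)) := by
        have := Module.Finite.span_of_finite K (finite_range w)
        refine finrank_mono ?_
        rw [map_span, span_le, ← range_comp]
        rintro _ ⟨i, rfl⟩
        exact h i
    _ ≤ k := (finrank_range_le_card w).trans (by simp)

theorem Module.Basis.isCompl_span_range_inl_inr {R M ι κ : Type*} [Ring R] [AddCommGroup M]
    [Module R M] (B : Module.Basis (ι ⊕ κ) R M) :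
    IsCompl (span R (range (B ∘ Sum.inl))) (span R (range (B ∘ Sum.inr))) := by
  simpa only [range_comp] using
    B.linearIndependent.isCompl_span_image B.span_eq isCompl_range_inl_range_inr

structure CounterexampleBrackets {K L : Type*} [CommRing K] [LieRing L] [LieAlgebra K L]
    (X : Fin 5 → L) (Y : Fin 4 → L) (β δ lam : K) : Prop where
  lie01 : ⁅X 0, X 1⁆ = Y 0
  lie02 : ⁅X 0, X 2⁆ = Y 1
  lie03 : ⁅X 0, X 3⁆ = Y 2
  lie04 : ⁅X 0, X 4⁆ = 0
  lie12 : ⁅X 1, X 2⁆ = Y 3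
  lie13 : ⁅X 1, X 3⁆ = 0
  lie14 : ⁅X 1, X 4⁆ = β • Y 2
  lie23 : ⁅X 2, X 3⁆ = 0
  lie24 : ⁅X 2, X 4⁆ = δ • Y 2
  lie34 : ⁅X 3, X 4⁆ = lam • Y 2
  lie_X_Y : ∀ i j, ⁅X i, Y j⁆ = 0
  lie_Y_Y : ∀ i j, ⁅Y i, Y j⁆ = 0

namespace CounterexampleBrackets

section CommRing

variable {K L : Type*} [CommRing K] [LieRing L] [LieAlgebra K L] {X : Fin 5 → L}
  {Y : Fin 4 → L} {β δ lam : K}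

theorem lie_mem_span_range (T : CounterexampleBrackets X Y β δ lam) (i j : Fin 5) :
    ⁅X i, X j⁆ ∈ span K (range Y) := by
  refine lie_mem_of_forall_lt (fun i j hij => ?_) i j
  fin_cases i <;> fin_cases j <;> simp at hij <;>
    simp [T.lie01, T.lie02, T.lie03, T.lie04, T.lie12, T.lie13, T.lie14, T.lie23, T.lie24,
      T.lie34, smul_mem, mem_span_of_mem]

theorem lie_succ_mem_span (T : CounterexampleBrackets X Y β δ lam) (i j : Fin 4) :
    ⁅X i.succ, X j.succ⁆ ∈ span K {Y 2, Y 3} := by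
  refine lie_mem_of_forall_lt (v := X ∘ Fin.succ) (fun i j hij => ?_) i j
  fin_cases i <;> fin_cases j <;> simp at hij <;>
    simp [T.lie12, T.lie13, T.lie14, T.lie23, T.lie24, T.lie34, smul_mem, mem_span_of_mem]

theorem lie_mem_span_singleton (T : CounterexampleBrackets X Y β δ lam) (i : Fin 5) {j : Fin 5}
    (hj : j = 3 ∨ j = 4) : ⁅X i, X j⁆ ∈ K ∙ Y 2 := by
  rcases hj with rfl | rfl <;> fin_cases i <;>
    simp [← lie_skew (X 4) (X 3), T.lie03, T.lie13, T.lie23, T.lie04, T.lie14, T.lie24, T.lie34,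
      smul_mem, mem_span_singleton_self]

theorem lie_zero_sum_smul (T : CounterexampleBrackets X Y β δ lam) (c : Fin 5 → K) :
    ⁅X 0, ∑ i, c i • X i⁆ = c 1 • Y 0 + c 2 • Y 1 + c 3 • Y 2 := by
  simp [Fin.sum_univ_five, T.lie01, T.lie02, T.lie03, T.lie04]

theorem lie_one_sum_smul (T : CounterexampleBrackets X Y β δ lam) (c : Fin 5 → K) :
    ⁅X 1, ∑ i, c i • X i⁆ = -c 0 • Y 0 + (c 4 * β) • Y 2 + c 2 • Y 3 := by
  simp [Fin.sum_univ_five, ← lie_skew (X 1) (X 0), T.lie01, T.lie12, T.lie13, T.lie14,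
    mul_smul]
  module

end CommRing

section Field

variable {K L : Type*} [Field K] [LieRing L] [LieAlgebra K L] {X : Fin 5 → L} {Y : Fin 4 → L}
  {β δ lam : K}

theorem eq_zero_of_forall_lie_eq_zero (T : CounterexampleBrackets X Y β δ lam)
    (hY : LinearIndependent K Y) (hβ : β ≠ 0) {x : L} (hx : x ∈ span K (range X))
    (hcentral : ∀ y : L, ⁅x, y⁆ = 0) : x = 0 := by
  replace hcentral (y : L) : ⁅y, x⁆ = 0 := by rw [← lie_skew, hcentral, neg_zero]
  obtain ⟨c, rfl⟩ := (mem_span_range_iff_exists_fun K).mp hx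
  have coeff (a : Fin 4 → K) (h : ∑ j, a j • Y j = 0) : ∀ j, a j = 0 :=
    Fintype.linearIndependent_iff.mp hY a h
  have h0 := coeff ![c 1, c 2, c 3, 0] (by
    simpa [Fin.sum_univ_four, T.lie_zero_sum_smul] using hcentral (X 0))
  have h1 := coeff ![-c 0, 0, c 4 * β, c 2] (by
    simpa [Fin.sum_univ_four, T.lie_one_sum_smul] using hcentral (X 1))
  have hc : c = 0 := by
    ext i
    fin_cases i
    exacts [by simpa using h1 0, h0 0, h0 1, h0 2, by simpa [hβ] using h1 2]
  simp [hc]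

theorem finrank_map_ad_le_three (T : CounterexampleBrackets X Y β δ lam) {Z : L}
    (hZ : Z ∈ span K (range X)) :
    Module.finrank K (map (LieAlgebra.ad K L Z) (span K (range X))) ≤ 3 := by
  have hY2 (j : Fin 5) (hj : j = 3 ∨ j = 4) : ⁅Z, X j⁆ ∈ K ∙ Y 2 := by
    refine lie_mem_of_mem_span (t := {X j}) ?_ hZ (mem_span_singleton_self _)
    rintro _ ⟨i, rfl⟩ _ rfl
    exact T.lie_mem_span_singleton i hj
  obtain ⟨c, hc⟩ := (mem_span_range_iff_exists_fun K).mp hZ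
  by_cases hc0 : c 0 = 0
  · have hZ' : Z ∈ span K (range (X ∘ Fin.succ)) := by
      rw [← hc, Fin.sum_univ_succ, hc0, zero_smul, zero_add]
      exact sum_mem fun i _ => smul_mem _ _ (subset_span ⟨i, rfl⟩)
    refine finrank_map_span_range_le _ X ![⁅Z, X 0⁆, Y 2, Y 3] fun j => ?_
    refine Fin.cases (subset_span ⟨0, rfl⟩) (fun j => ?_) j
    have : ⁅Z, X j.succ⁆ ∈ span K {Y 2, Y 3} := by
      refine lie_mem_of_mem_span (t := {X j.succ}) ?_ hZ' (mem_span_singleton_self _)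
      rintro _ ⟨i, rfl⟩ _ rfl
      exact T.lie_succ_mem_span i j
    refine span_mono ?_ this
    rintro _ (rfl | rfl)
    exacts [⟨1, rfl⟩, ⟨2, rfl⟩]
  · have hrel : c 0 • ⁅Z, X 0⁆ =
        -(c 1 • ⁅Z, X 1⁆ + c 2 • ⁅Z, X 2⁆ + c 3 • ⁅Z, X 3⁆ + c 4 • ⁅Z, X 4⁆) := by
      have h := lie_self Z
      nth_rewrite 2 [← hc] at h
      simp only [Fin.sum_univ_five, lie_add, lie_smul] at h
      rw [eq_neg_iff_add_eq_zero, ← h]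
      abel
    set S := span K (range ![⁅Z, X 1⁆, ⁅Z, X 2⁆, Y 2])
    have h1 : ⁅Z, X 1⁆ ∈ S := subset_span ⟨0, rfl⟩
    have h2 : ⁅Z, X 2⁆ ∈ S := subset_span ⟨1, rfl⟩
    have hY2S : Y 2 ∈ S := subset_span ⟨2, rfl⟩
    have h34 (j : Fin 5) (hj : j = 3 ∨ j = 4) : ⁅Z, X j⁆ ∈ S :=
      span_le.mpr (singleton_subset_iff.mpr hY2S) (hY2 j hj)
    have h0 : ⁅Z, X 0⁆ ∈ S := by
      rw [← smul_mem_iff S hc0, hrel]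
      exact neg_mem (add_mem (add_mem (add_mem (smul_mem _ _ h1) (smul_mem _ _ h2))
        (smul_mem _ _ (h34 3 (.inl rfl)))) (smul_mem _ _ (h34 4 (.inr rfl))))
    refine finrank_map_span_range_le _ X ![⁅Z, X 1⁆, ⁅Z, X 2⁆, Y 2] fun j => ?_
    fin_cases j
    exacts [h0, h1, h2, h34 3 (.inl rfl), h34 4 (.inr rfl)]

theorem finrank_map_ad_zero (T : CounterexampleBrackets X Y β δ lam)
    (hY : LinearIndependent K Y) :
    Module.finrank K (map (LieAlgebra.ad K L (X 0)) (span K (range X))) = 3 := by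
  refine le_antisymm (T.finrank_map_ad_le_three (subset_span ⟨0, rfl⟩)) ?_
  have hle :
      span K (range (Y ∘ Fin.castSucc)) ≤ map (LieAlgebra.ad K L (X 0)) (span K (range X)) := by
    rw [map_span, span_le]
    rintro _ ⟨j, rfl⟩
    apply subset_span
    fin_cases j
    exacts [⟨X 1, ⟨1, rfl⟩, T.lie01⟩, ⟨X 2, ⟨2, rfl⟩, T.lie02⟩, ⟨X 3, ⟨3, rfl⟩, T.lie03⟩]
  have := Module.Finite.span_of_finite K (finite_range X)
  calc 3 = Module.finrank K (span K (range (Y ∘ Fin.castSucc))) := by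
        rw [finrank_span_eq_card (hY.comp _ (Fin.castSucc_injective 3)), Fintype.card_fin]
    _ ≤ _ := finrank_mono hle

end Field

end CounterexampleBrackets

theorem not_adSurjective_of_adRank_lt {L : Type*} [LieRing L] [LieAlgebra ℝ L]
    [Module.Finite ℝ L] {m1 m2 : Submodule ℝ L}
    (h : ∀ Z ∈ m1, adRank L m1 Z < Module.finrank ℝ m2) :
    ¬ ∃ Z ∈ m1, ∀ z ∈ m2, ∃ W ∈ m1, ⁅Z, W⁆ = z := by
  rintro ⟨Z, hZ, hsurj⟩
  have hle : m2 ≤ m1.map (LieAlgebra.ad ℝ L Z) := fun z hz => by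
    obtain ⟨W, hW, rfl⟩ := hsurj z hz
    exact ⟨W, hW, rfl⟩
  exact (finrank_mono hle).not_gt (h Z hZ)

theorem CounterexampleBrackets.isStep2FGLA {L : Type*} [LieRing L] [LieAlgebra ℝ L]
    {X : Fin 5 → L} {Y : Fin 4 → L} {β δ lam : ℝ} (T : CounterexampleBrackets X Y β δ lam)
    (hcompl : IsCompl (span ℝ (range X)) (span ℝ (range Y))) :
    IsStep2FGLA L (span ℝ (range X)) (span ℝ (range Y)) where
  compl := hcompl
  span_brackets := by
    refine le_antisymm (span_le.mpr ?_) (span_le.mpr ?_)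
    · rintro _ ⟨j, rfl⟩
      have hX (i : Fin 5) : X i ∈ span ℝ (range X) := subset_span ⟨i, rfl⟩
      apply subset_span
      fin_cases j
      exacts [⟨X 0, hX 0, X 1, hX 1, T.lie01⟩, ⟨X 0, hX 0, X 2, hX 2, T.lie02⟩,
        ⟨X 0, hX 0, X 3, hX 3, T.lie03⟩, ⟨X 1, hX 1, X 2, hX 2, T.lie12⟩]
    · rintro _ ⟨x, hx, y, hy, rfl⟩
      exact lie_mem_of_mem_span (by simp [T.lie_mem_span_range]) hx hy
  bracket_m1_m2 x hx y hy := by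
    simpa using lie_mem_of_mem_span (N := ⊥) (by simp [T.lie_X_Y]) hx hy
  bracket_m2_m2 x hx y hy := by
    simpa using lie_mem_of_mem_span (N := ⊥) (by simp [T.lie_Y_Y]) hx hy

theorem counterexample_dim4_not_adSurjective_general
    (β δ lam : ℝ) (hβ : β ≠ 0)
    (L : Type*) [LieRing L] [LieAlgebra ℝ L]
    (B : Module.Basis (Fin 5 ⊕ Fin 4) ℝ L) (X : Fin 5 → L) (Y : Fin 4 → L)
    (hX : ∀ i, X i = B (Sum.inl i)) (hY : ∀ j, Y j = B (Sum.inr j))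
    (h12 : ⁅X 0, X 1⁆ = Y 0) (h13 : ⁅X 0, X 2⁆ = Y 1) (h14 : ⁅X 0, X 3⁆ = Y 2)
    (h15 : ⁅X 0, X 4⁆ = 0)
    (h23 : ⁅X 1, X 2⁆ = Y 3) (h24 : ⁅X 1, X 3⁆ = 0) (h25 : ⁅X 1, X 4⁆ = β • Y 2)
    (h34 : ⁅X 2, X 3⁆ = 0) (h35 : ⁅X 2, X 4⁆ = δ • Y 2)
    (h45 : ⁅X 3, X 4⁆ = lam • Y 2)
    (hXY : ∀ i j, ⁅X i, Y j⁆ = 0) (hYY : ∀ i j, ⁅Y i, Y j⁆ = 0) :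
    IsStep2FGLA L (Submodule.span ℝ (Set.range X)) (Submodule.span ℝ (Set.range Y)) ∧
      Module.finrank ℝ ↥(Submodule.span ℝ (Set.range X)) = 5 ∧
      Module.finrank ℝ ↥(Submodule.span ℝ (Set.range Y)) = 4 ∧
      (∀ x ∈ Submodule.span ℝ (Set.range X), (∀ y : L, ⁅x, y⁆ = 0) → x = 0) ∧
      ¬ (∃ Z ∈ Submodule.span ℝ (Set.range X),
          ∀ z ∈ Submodule.span ℝ (Set.range Y),
            ∃ W ∈ Submodule.span ℝ (Set.range X), ⁅Z, W⁆ = z) ∧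
      (∀ Z ∈ Submodule.span ℝ (Set.range X), adRank L (Submodule.span ℝ (Set.range X)) Z ≤ 3) ∧
      (∃ Z ∈ Submodule.span ℝ (Set.range X), adRank L (Submodule.span ℝ (Set.range X)) Z = 3) := by
  have T : CounterexampleBrackets X Y β δ lam :=
    ⟨h12, h13, h14, h15, h23, h24, h25, h34, h35, h45, hXY, hYY⟩
  have hXB : X = B ∘ Sum.inl := funext hX
  have hYB : Y = B ∘ Sum.inr := funext hY
  have hXli : LinearIndependent ℝ X := hXB ▸ B.linearIndependent.comp _ Sum.inl_injective
  have hYli : LinearIndependent ℝ Y := hYB ▸ B.linearIndependent.comp _ Sum.inr_injective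
  have hdimY : Module.finrank ℝ (span ℝ (range Y)) = 4 := by
    simpa using finrank_span_eq_card hYli
  have : Module.Finite ℝ L := .of_basis B
  refine ⟨T.isStep2FGLA ?_, by simpa using finrank_span_eq_card hXli, hdimY,
    fun x hx => T.eq_zero_of_forall_lie_eq_zero hYli hβ hx, ?_,
    fun Z hZ => T.finrank_map_ad_le_three hZ, X 0, subset_span ⟨0, rfl⟩,
    T.finrank_map_ad_zero hYli⟩
  · rw [hXB, hYB]
    exact B.isCompl_span_range_inl_inr
  · exact not_adSurjective_of_adRank_lt fun Z hZ =>
      (T.finrank_map_ad_le_three hZ).trans_lt (by rw [hdimY]; norm_num)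

/-- For nonzero reals `β`, `δ`, `λ`, the 9-dimensional real Lie algebra with basis
`X₁, …, X₅, Y₁, …, Y₄` and nonzero brackets (up to skew-symmetry)
`⁅X₁, Xᵢ⁆ = Y_{i-1}` (`i = 2, 3, 4`), `⁅X₂, X₃⁆ = Y₄`, `⁅X₂, X₅⁆ = β Y₃`,
`⁅X₃, X₅⁆ = δ Y₃`, `⁅X₄, X₅⁆ = λ Y₃`, graded by `𝔪₋₁ = span{X₁, …, X₅}` and
`𝔪₋₂ = span{Y₁, …, Y₄}`, is a step 2 fundamental graded Lie algebra with
`dim 𝔪₋₁ = 5`, `dim 𝔪₋₂ = 4`, trivial intersection of `𝔪₋₁` with the center, which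
is NOT ad-surjective: in fact `max {rank (ad X) : X ∈ 𝔪₋₁} = 3 < 4 = dim 𝔪₋₂`. -/
theorem counterexample_dim4_not_adSurjective
    (β δ lam : ℝ) (hβ : β ≠ 0) (hδ : δ ≠ 0) (hlam : lam ≠ 0)
    (L : Type*) [LieRing L] [LieAlgebra ℝ L]
    (B : Module.Basis (Fin 5 ⊕ Fin 4) ℝ L) (X : Fin 5 → L) (Y : Fin 4 → L)
    (hX : ∀ i, X i = B (Sum.inl i)) (hY : ∀ j, Y j = B (Sum.inr j))
    (h12 : ⁅X 0, X 1⁆ = Y 0) (h13 : ⁅X 0, X 2⁆ = Y 1) (h14 : ⁅X 0, X 3⁆ = Y 2)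
    (h15 : ⁅X 0, X 4⁆ = 0)
    (h23 : ⁅X 1, X 2⁆ = Y 3) (h24 : ⁅X 1, X 3⁆ = 0) (h25 : ⁅X 1, X 4⁆ = β • Y 2)
    (h34 : ⁅X 2, X 3⁆ = 0) (h35 : ⁅X 2, X 4⁆ = δ • Y 2)
    (h45 : ⁅X 3, X 4⁆ = lam • Y 2)
    (hXY : ∀ i j, ⁅X i, Y j⁆ = 0) (hYY : ∀ i j, ⁅Y i, Y j⁆ = 0) :
    IsStep2FGLA L (Submodule.span ℝ (Set.range X)) (Submodule.span ℝ (Set.range Y)) ∧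
      Module.finrank ℝ ↥(Submodule.span ℝ (Set.range X)) = 5 ∧
      Module.finrank ℝ ↥(Submodule.span ℝ (Set.range Y)) = 4 ∧
      (∀ x ∈ Submodule.span ℝ (Set.range X), (∀ y : L, ⁅x, y⁆ = 0) → x = 0) ∧
      ¬ (∃ Z ∈ Submodule.span ℝ (Set.range X),
          ∀ z ∈ Submodule.span ℝ (Set.range Y),
            ∃ W ∈ Submodule.span ℝ (Set.range X), ⁅Z, W⁆ = z) ∧
      (∀ Z ∈ Submodule.span ℝ (Set.range X), adRank L (Submodule.span ℝ (Set.range X)) Z ≤ 3) ∧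
      (∃ Z ∈ Submodule.span ℝ (Set.range X), adRank L (Submodule.span ℝ (Set.range X)) Z = 3) :=
  counterexample_dim4_not_adSurjective_general β δ lam hβ L B X Y hX hY h12 h13 h14 h15 h23 h24 h25
    h34 h35 h45 hXY hYY
end
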